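/- Let m ≥ 2, n = 2m, and let a, b : Fin m → Fin n be injective maps with disjoint ranges covering Fin n (write i_l = a(l), j_l = b(l)). Fix k and let r be any strict total order on Fin n of the form α_k i_k j_k β_k, i.e. r places first the m−1 elements {j_1,…,j_m}∖{j_k} in some arbitrary order, then i_k, then j_k, then the m−1 elements {i_1,…,i_m}∖{i_k} in some arbitrary order. Then the incidence vector χ_r satisfies f(χ_r) = 1, where f(x) = 2·∑_{l} x(i_l, j_l) − ∑_{l} ∑_{q} x(i_l, j_q). -/
import Mathlib


open scoped BigOperators

/-- A point of the linear ordering polytope relaxation `B_n`. -/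
def IsBn {n : ℕ} (x : Fin n → Fin n → ℝ) : Prop :=
  (∀ i, x i i = 0) ∧
  (∀ i j : Fin n, i ≠ j → 0 ≤ x i j ∧ x i j ≤ 1) ∧
  (∀ i j : Fin n, i ≠ j → x i j + x j i = 1) ∧
  (∀ i j k : Fin n, i ≠ j → i ≠ k → j ≠ k →
    0 ≤ x i j + x j k - x i k ∧ x i j + x j k - x i k ≤ 1)

/-- A strict total order on `Fin n`: irreflexive, transitive and total. -/
def IsSTO {n : ℕ} (r : Fin n → Fin n → Prop) : Prop :=
  (∀ i, ¬ r i i) ∧ (∀ i j k, r i j → r j k → r i k) ∧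
  (∀ i j : Fin n, i ≠ j → r i j ∨ r j i)

open Classical in
/-- The incidence vector `χ_r` of a relation `r`. -/
noncomputable def chi {n : ℕ} (r : Fin n → Fin n → Prop) : Fin n → Fin n → ℝ :=
  fun i j => if r i j then 1 else 0

/-- The fence function `f(x) = 2·∑ l, x(a l, b l) − ∑ l, ∑ q, x(a l, b q)`. -/
noncomputable def fence {m n : ℕ} (a b : Fin m → Fin n)
    (x : Fin n → Fin n → ℝ) : ℝ :=
  2 * ∑ l, x (a l) (b l) - ∑ l, ∑ q, x (a l) (b q)

theorem fence_tight_type1 {m : ℕ} (hm : 2 ≤ m)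
    (a b : Fin m → Fin (2 * m))
    (ha : Function.Injective a) (hb : Function.Injective b)
    (hab : ∀ l q, a l ≠ b q)
    (hcov : ∀ u : Fin (2 * m), (∃ l, u = a l) ∨ (∃ l, u = b l))
    (k : Fin m)
    (s : Fin (2 * m) ≃ Fin (2 * m))
    -- the first `m - 1` positions carry `{j_1, …, j_m} \ {j_k}` in some order
    (hα : ∀ p : Fin (2 * m), (p : ℕ) < m - 1 → ∃ l, l ≠ k ∧ s p = b l)
    -- then `i_k`
    (hik : ∀ p : Fin (2 * m), (p : ℕ) = m - 1 → s p = a k)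
    -- then `j_k`
    (hjk : ∀ p : Fin (2 * m), (p : ℕ) = m → s p = b k)
    -- the remaining positions carry `{i_1, …, i_m} \ {i_k}` in some order
    (hβ : ∀ p : Fin (2 * m), m < (p : ℕ) → ∃ l, l ≠ k ∧ s p = a l)
    (r : Fin (2 * m) → Fin (2 * m) → Prop)
    (hr : ∀ p q : Fin (2 * m), r (s p) (s q) ↔ p < q) :
    fence a b (chi r) = 1 := by
  classical
  have hm1 : m - 1 < 2 * m := by omega
  have hm2 : m < 2 * m := by omega
  have hpak : (s.symm (a k) : ℕ) = m - 1 := by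
    have h := hik ⟨m - 1, hm1⟩ rfl
    rw [← h, Equiv.symm_apply_apply]
  have hpbk : (s.symm (b k) : ℕ) = m := by
    have h := hjk ⟨m, hm2⟩ rfl
    rw [← h, Equiv.symm_apply_apply]
  have hpal : ∀ l, l ≠ k → m < (s.symm (a l) : ℕ) := by
    intro l hl
    set p := s.symm (a l) with hp
    have hsp : s p = a l := Equiv.apply_symm_apply s (a l)
    rcases (by omega : (p:ℕ) < m - 1 ∨ (p:ℕ) = m - 1 ∨ (p:ℕ) = m ∨ m < (p:ℕ)) with h | h | h | h
    · obtain ⟨l', _, hl'⟩ := hα p h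
      rw [hsp] at hl'
      exact absurd hl' (hab l l')
    · have h2 := hik p h; rw [hsp] at h2
      exact absurd (ha h2) hl
    · have h2 := hjk p h; rw [hsp] at h2
      exact absurd h2 (hab l k)
    · exact h
  have hpbl : ∀ l, l ≠ k → (s.symm (b l) : ℕ) < m - 1 := by
    intro l hl
    set p := s.symm (b l) with hp
    have hsp : s p = b l := Equiv.apply_symm_apply s (b l)
    rcases (by omega : (p:ℕ) < m - 1 ∨ (p:ℕ) = m - 1 ∨ (p:ℕ) = m ∨ m < (p:ℕ)) with h | h | h | h
    · exact h
    · have h2 := hik p h; rw [hsp] at h2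
      exact absurd h2.symm (hab k l)
    · have h2 := hjk p h; rw [hsp] at h2
      exact absurd (hb h2) hl
    · obtain ⟨l', _, hl'⟩ := hβ p h
      rw [hsp] at hl'
      exact absurd hl'.symm (hab l' l)
  have key : ∀ l q, chi r (a l) (b q) = if l = k ∧ q = k then 1 else 0 := by
    intro l q
    have hiff : r (a l) (b q) ↔ (s.symm (a l) : ℕ) < (s.symm (b q) : ℕ) := by
      have h := hr (s.symm (a l)) (s.symm (b q))
      rw [Equiv.apply_symm_apply, Equiv.apply_symm_apply] at h
      rw [h, Fin.lt_def]
    rcases eq_or_ne l k with hl | hl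
    · rcases eq_or_ne q k with hq | hq
      · have hrr : r (a l) (b q) := by rw [hiff, hl, hq, hpak, hpbk]; omega
        have hrr' : r (a k) (b k) := by rwa [hl, hq] at hrr
        simp [chi, hrr', hl, hq]
      · have hrr : ¬ r (a l) (b q) := by
          rw [hiff, hl, hpak]
          have := hpbl q hq; omega
        simp [chi, hrr, hq]
    · have hrr : ¬ r (a l) (b q) := by
        rw [hiff]
        have h1 := hpal l hl
        rcases eq_or_ne q k with hq | hq
        · subst hq; omega
        · have := hpbl q hq; omega
      simp [chi, hrr, hl]
  unfold fence
  have h1 : ∑ l, chi r (a l) (b l) = 1 := by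
    simp only [key, and_self]
    simp
  have h2 : ∑ l, ∑ q, chi r (a l) (b q) = 1 := by
    simp only [key]
    rw [Finset.sum_eq_single k]
    · rw [Finset.sum_eq_single k] <;> simp
    · intro l _ hl
      apply Finset.sum_eq_zero
      intro q _
      simp [hl]
    · simp
  rw [h1, h2]; ring
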